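/- arXiv:2311.07554 — 2 statements merged into one kernel-verified Lean document; each statement's English description precedes it below -/
import Mathlib

section
/- Let G be a simple graph on a finite vertex set V with edge set E(G), and let p : E(G) → ℝ with 0 ≤ p(e) ≤ 1 for all edges e. For each subset E' ⊆ E(G), let w(E') = (∏_{e∈E'} p(e)) · (∏_{e∈E(G)\E'} (1−p(e))), and let reach_{E'}(S) = {u ∈ V : there exists s ∈ S with u reachable from s in the spanning subgraph of G with edge set E'}. Define σ(S) = ∑_{E' ⊆ E(G)} w(E') · |reach_{E'}(S)|. Then σ is monotone (σ(X) ≤ σ(Y) whenever X ⊆ Y) and submodular (σ(X ∪ {v}) − σ(X) ≥ σ(Y ∪ {v}) − σ(Y) for all X ⊆ Y and v ∉ Y). -/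
/-!
Fix the set `E'` of live edges. Then the activated set is the image of the seed set under the
reachability relation of the live-edge graph, so its size is a coverage function, which is
monotone and submodular. The influence spread is a combination of these coverage functions with
the nonnegative weights `w E'`, and both properties survive such combinations.
-/

open Finset

theorem Set.ncard_union_add_ncard_le_of_subset {α : Type*} [Finite α] {A B : Set α} (C : Set α)
    (h : A ⊆ B) : (B ∪ C).ncard + A.ncard ≤ (A ∪ C).ncard + B.ncard := by
  have hunion : A ∪ C ∪ B = B ∪ C := by
    rw [Set.union_right_comm, Set.union_eq_right.mpr h]
  have hinter : A ⊆ (A ∪ C) ∩ B := Set.subset_inter Set.subset_union_left h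
  rw [← Set.ncard_union_add_ncard_inter (A ∪ C) B, hunion]
  exact Nat.add_le_add_left (Set.ncard_le_ncard hinter) _

namespace SetRel

variable {α β : Type*} [Finite β]

theorem ncard_image_mono (R : SetRel α β) : Monotone fun S => (R.image S).ncard :=
  fun _ _ h => Set.ncard_le_ncard (image_subset_image h)

theorem ncard_image_union_add_le (R : SetRel α β) {X Y : Set α} (Z : Set α) (h : X ⊆ Y) :
    (R.image (Y ∪ Z)).ncard + (R.image X).ncard ≤ (R.image (X ∪ Z)).ncard + (R.image Y).ncard := by
  rw [image_union, image_union]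
  exact Set.ncard_union_add_ncard_le_of_subset _ (image_subset_image h)

variable {ι : Type*} (s : Finset ι) {w : ι → ℝ} (R : ι → SetRel α β)

theorem monotone_sum_mul_ncard_image (hw : ∀ i ∈ s, 0 ≤ w i) :
    Monotone fun S => ∑ i ∈ s, w i * ((R i).image S).ncard :=
  fun _ _ h => sum_le_sum fun i hi =>
    mul_le_mul_of_nonneg_left (by exact_mod_cast (R i).ncard_image_mono h) (hw i hi)

theorem sum_mul_ncard_image_union_sub_le (hw : ∀ i ∈ s, 0 ≤ w i) {X Y : Set α} (Z : Set α)
    (h : X ⊆ Y) :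
    (∑ i ∈ s, w i * ((R i).image (Y ∪ Z)).ncard) - ∑ i ∈ s, w i * ((R i).image Y).ncard ≤
      (∑ i ∈ s, w i * ((R i).image (X ∪ Z)).ncard) - ∑ i ∈ s, w i * ((R i).image X).ncard := by
  rw [sub_le_sub_iff, ← sum_add_distrib, ← sum_add_distrib]
  refine sum_le_sum fun i hi => ?_
  rw [← mul_add, ← mul_add]
  exact mul_le_mul_of_nonneg_left
    (by exact_mod_cast (R i).ncard_image_union_add_le Z h) (hw i hi)

end SetRel

theorem Finset.prod_mul_prod_sdiff_one_sub_nonneg {ι : Type*} [DecidableEq ι] {s t : Finset ι}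
    {p : ι → ℝ} (hp : ∀ i ∈ t, 0 ≤ p i ∧ p i ≤ 1) (hst : s ⊆ t) :
    0 ≤ (∏ i ∈ s, p i) * ∏ i ∈ t \ s, (1 - p i) :=
  mul_nonneg (prod_nonneg fun i hi => (hp i (hst hi)).1)
    (prod_nonneg fun i hi => sub_nonneg.mpr (hp i (mem_sdiff.mp hi).1).2)

/-- The influence spread `σ(S)` in the Independent Cascade model on an
undirected graph `G` with edge probabilities `p` is monotone and submodular. -/
theorem IC_influence_monotone_submodular
    {V : Type*} [Fintype V] [DecidableEq V]
    (G : SimpleGraph V) [Fintype G.edgeSet]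
    (p : Sym2 V → ℝ) (hp : ∀ e ∈ G.edgeSet, 0 ≤ p e ∧ p e ≤ 1) :
    let reach : Finset (Sym2 V) → Set V → Set V := fun E' S =>
      {u | ∃ s ∈ S, (SimpleGraph.fromEdgeSet (↑E' : Set (Sym2 V))).Reachable s u}
    let w : Finset (Sym2 V) → ℝ := fun E' =>
      (∏ e ∈ E', p e) * ∏ e ∈ G.edgeFinset \ E', (1 - p e)
    let σ : Set V → ℝ := fun S =>
      ∑ E' ∈ G.edgeFinset.powerset, w E' * ((reach E' S).ncard : ℝ)
    (∀ X Y : Set V, X ⊆ Y → σ X ≤ σ Y) ∧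
    (∀ X Y : Set V, ∀ v : V, X ⊆ Y → v ∉ Y →
      σ (X ∪ {v}) - σ X ≥ σ (Y ∪ {v}) - σ Y) := by
  intro reach w σ
  have hw : ∀ E' ∈ G.edgeFinset.powerset, 0 ≤ w E' := fun _ hE' =>
    prod_mul_prod_sdiff_one_sub_nonneg (fun e he => hp e (SimpleGraph.mem_edgeFinset.mp he))
      (mem_powerset.mp hE')
  let reachable : Finset (Sym2 V) → SetRel V V := fun E' =>
    {x | (SimpleGraph.fromEdgeSet (↑E' : Set (Sym2 V))).Reachable x.1 x.2}
  exact ⟨fun _ _ h => SetRel.monotone_sum_mul_ncard_image _ reachable hw h,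
    fun _ _ v h _ => SetRel.sum_mul_ncard_image_union_sub_le _ reachable hw {v} h⟩
end

section
/- Let V be a finite type and f : Finset V → ℝ a set function with f(∅) = 0 that is monotone and submodular. Let k ≥ 1 with k ≤ |V|, and let ∅ = S_0 ⊆ S_1 ⊆ … ⊆ S_k be a greedy sequence: for each i, S_{i+1} = S_i ∪ {v_i} where v_i ∉ S_i satisfies f(S_i ∪ {v_i}) ≥ f(S_i ∪ {u}) for every u ∉ S_i. Then for every T ⊆ V with |T| ≤ k, one has f(S_k) ≥ (1 − (1 − 1/k)^k) · f(T). -/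
/-!
Write `Δᵢ = f Sᵢ₊₁ - f Sᵢ` for the greedy gain at step `i`. By monotonicity and submodularity,
`f T ≤ f (Sᵢ ∪ T) ≤ f Sᵢ + ∑_{u ∈ T} (f (insert u Sᵢ) - f Sᵢ) ≤ f Sᵢ + k Δᵢ`,
because the greedy choice makes every marginal gain at most `Δᵢ`. So the gap `f T - f Sᵢ` shrinks
by the factor `1 - 1/k` at each step, and after `k` steps it is at most `(1 - 1/k)^k f T`.
-/

open Finset

section SetFunction

variable {V : Type*} [DecidableEq V] {f : Finset V → ℝ}

theorem union_le_add_sum_marginal_of_submodular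
    (hsub : ∀ X Y : Finset V, ∀ v : V, X ⊆ Y → v ∉ Y →
      f (insert v X) - f X ≥ f (insert v Y) - f Y)
    (X A : Finset V) : f (X ∪ A) ≤ f X + ∑ u ∈ A, (f (insert u X) - f X) := by
  induction A using Finset.induction_on with
  | empty => simp
  | @insert a A ha ih =>
    rw [sum_insert ha, union_insert]
    by_cases haX : a ∈ X
    · rw [insert_eq_of_mem (mem_union_left A haX), insert_eq_of_mem haX]
      linarith
    · have := hsub X (X ∪ A) a subset_union_left (by simp [haX, ha])
      linarith

theorem le_add_card_mul_of_marginal_le (hmono : Monotone f)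
    (hsub : ∀ X Y : Finset V, ∀ v : V, X ⊆ Y → v ∉ Y →
      f (insert v X) - f X ≥ f (insert v Y) - f Y)
    {X : Finset V} {δ : ℝ} (hδ : ∀ u, f (insert u X) - f X ≤ δ) (T : Finset V) :
    f T ≤ f X + #T * δ :=
  calc f T ≤ f (X ∪ T) := hmono subset_union_right
    _ ≤ f X + ∑ u ∈ T, (f (insert u X) - f X) := union_le_add_sum_marginal_of_submodular hsub X T
    _ ≤ f X + #T * δ := by
      have := sum_le_card_nsmul T _ δ fun u _ => hδ u
      rw [nsmul_eq_mul] at this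
      linarith

theorem sub_le_mul_greedy_gain (hmono : Monotone f)
    (hsub : ∀ X Y : Finset V, ∀ v : V, X ⊆ Y → v ∉ Y →
      f (insert v X) - f X ≥ f (insert v Y) - f Y)
    {X : Finset V} {w : V} (hbest : ∀ u, u ∉ X → f (insert w X) ≥ f (insert u X))
    {n : ℕ} {T : Finset V} (hT : #T ≤ n) :
    f T - f X ≤ n * (f (insert w X) - f X) := by
  have hgain : 0 ≤ f (insert w X) - f X := sub_nonneg.mpr (hmono (subset_insert w X))
  have hδ : ∀ u, f (insert u X) - f X ≤ f (insert w X) - f X := by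
    intro u
    by_cases hu : u ∈ X
    · rwa [insert_eq_of_mem hu, sub_self]
    · linarith [hbest u hu]
  have hcard : (#T : ℝ) ≤ n := by exact_mod_cast hT
  nlinarith [le_add_card_mul_of_marginal_le hmono hsub hδ T]

end SetFunction

theorem le_one_sub_one_div_mul_of_le_mul_sub {n : ℕ} (hn : 0 < n) {a b : ℝ}
    (h : a ≤ n * (a - b)) : b ≤ (1 - 1 / (n : ℝ)) * a := by
  have hn' : (0 : ℝ) < n := by exact_mod_cast hn
  rw [sub_mul, one_mul, div_mul_eq_mul_div, one_mul, le_sub_iff_add_le, ← le_sub_iff_add_le',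
    div_le_iff₀ hn']
  linarith

theorem greedy_submodular_guarantee_general
    {V : Type*} [DecidableEq V]
    (f : Finset V → ℝ) (hf0 : f ∅ = 0)
    (hmono : ∀ X Y : Finset V, X ⊆ Y → f X ≤ f Y)
    (hsub : ∀ X Y : Finset V, ∀ v : V, X ⊆ Y → v ∉ Y →
      f (insert v X) - f X ≥ f (insert v Y) - f Y)
    (k : ℕ)
    (S : ℕ → Finset V) (v : ℕ → V)
    (hS0 : S 0 = ∅)
    (hgreedy : ∀ i < k, v i ∉ S i ∧ S (i + 1) = insert (v i) (S i) ∧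
      ∀ u : V, u ∉ S i → f (insert (v i) (S i)) ≥ f (insert u (S i))) :
    ∀ T : Finset V, T.card ≤ k →
      f (S k) ≥ (1 - (1 - 1 / (k : ℝ)) ^ k) * f T := by
  intro T hT
  have hstep : ∀ i < k, f T - f (S (i + 1)) ≤ (1 - 1 / (k : ℝ)) * (f T - f (S i)) := by
    intro i hi
    obtain ⟨-, hSi, hbest⟩ := hgreedy i hi
    have hgap := sub_le_mul_greedy_gain (fun X Y => hmono X Y) hsub hbest hT
    rw [← hSi] at hgap
    exact le_one_sub_one_div_mul_of_le_mul_sub (by omega) (by linarith)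
  -- `1 - 1 / k ≥ 0` also for `k = 0`, where `1 / 0 = 0`
  have hgeom := le_geom (u := fun i => f T - f (S i)) (Nat.one_sub_one_div_cast_nonneg k) k hstep
  simp only [hS0, hf0, sub_zero] at hgeom
  linarith

/-- Greedy guarantee for monotone submodular maximization: if the greedy
sequence `S 0 = ∅`, `S (i+1) = insert (v i) (S i)` always inserts an element
of maximal marginal gain, then for every `T` with `|T| ≤ k`,
`f (S k) ≥ (1 − (1 − 1/k)^k) · f T`. -/
theorem greedy_submodular_guarantee
    {V : Type*} [Fintype V] [DecidableEq V]
    (f : Finset V → ℝ) (hf0 : f ∅ = 0)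
    (hmono : ∀ X Y : Finset V, X ⊆ Y → f X ≤ f Y)
    (hsub : ∀ X Y : Finset V, ∀ v : V, X ⊆ Y → v ∉ Y →
      f (insert v X) - f X ≥ f (insert v Y) - f Y)
    (k : ℕ) (hk : 1 ≤ k) (hkcard : k ≤ Fintype.card V)
    (S : ℕ → Finset V) (v : ℕ → V)
    (hS0 : S 0 = ∅)
    (hgreedy : ∀ i < k, v i ∉ S i ∧ S (i + 1) = insert (v i) (S i) ∧
      ∀ u : V, u ∉ S i → f (insert (v i) (S i)) ≥ f (insert u (S i))) :
    ∀ T : Finset V, T.card ≤ k →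
      f (S k) ≥ (1 - (1 - 1 / (k : ℝ)) ^ k) * f T :=
  greedy_submodular_guarantee_general f hf0 hmono hsub k S v hS0 hgreedy
end
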